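/- For every formula φ of the modal logic PAML(□) (modal operators □, ◇ plus quantifier-free Presburger constraints on places as atoms), the set of markings in ℕⁿ satisfying φ in the unlabelled transition graph of a Petri net with n places is semilinear: the satisfaction set of □ψ equals ℕⁿ \ pre(ℕⁿ \ X_ψ), of ◇ψ equals pre(X_ψ), Boolean connectives correspond to Boolean set operations, and atomic Presburger formulas define semilinear sets. -/

import Mathlib

structure PetriNet (P T : Type) where
  pre : P → T → ℕ
  post : T → P → ℕ
  M0 : P → ℕ

namespace PetriNet

variable {P T : Type}

/-- Transition `t` is enabled at marking `M`. -/
def enabled (N : PetriNet P T) (t : T) (M : P → ℕ) : Prop :=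
  ∀ p, N.pre p t ≤ M p

/-- `M [t⟩ M'`: firing transition `t` at `M` yields `M'`. -/
def fires (N : PetriNet P T) (t : T) (M M' : P → ℕ) : Prop :=
  N.enabled t M ∧ ∀ p, M' p = M p + N.post t p - N.pre p t

/-- One-step relation `M → M'`. -/
def step (N : PetriNet P T) (M M' : P → ℕ) : Prop := ∃ t, N.fires t M M'

/-- Reachability `M →* M'`: reflexive-transitive closure of `step`. -/
def reach (N : PetriNet P T) : (P → ℕ) → (P → ℕ) → Prop :=
  Relation.ReflTransGen N.step

/-- The reachability set of `N`. -/
def Reach (N : PetriNet P T) : Set (P → ℕ) := {M | N.reach N.M0 M}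

end PetriNet

/-- A linear subset: base vector plus ℕ-linear combinations of finitely many periods. -/
def LinearSet {M : Type*} [AddCommMonoid M] (E : Set M) : Prop :=
  ∃ (x : M) (m : ℕ) (y : Fin m → M),
    E = {v | ∃ k : Fin m → ℕ, v = x + ∑ i, k i • y i}

/-- A semilinear subset: finite union of linear sets. -/
def SemilinearSet {M : Type*} [AddCommMonoid M] (E : Set M) : Prop :=
  ∃ (m : ℕ) (L : Fin m → Set M), (∀ i, LinearSet (L i)) ∧ E = ⋃ i, L i

/-- Quantifier-free Presburger constraints over n place counts. -/
inductive PAtom (n : ℕ) where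
  | top : PAtom n
  | le : (Fin n → ℤ) → ℤ → PAtom n
  | ge : (Fin n → ℤ) → ℤ → PAtom n
  | mod : (Fin n → ℤ) → ℕ → ℕ → PAtom n
  | and : PAtom n → PAtom n → PAtom n
  | neg : PAtom n → PAtom n

def PAtom.sat {n : ℕ} (M : Fin n → ℕ) : PAtom n → Prop
  | .top => True
  | .le a k => (∑ i, a i * (M i : ℤ)) ≤ k
  | .ge a k => k ≤ ∑ i, a i * (M i : ℤ)
  | .mod a c k => Int.ModEq (c : ℤ) (∑ i, a i * (M i : ℤ)) (k : ℤ)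
  | .and φ ψ => PAtom.sat M φ ∧ PAtom.sat M ψ
  | .neg φ => ¬ PAtom.sat M φ

/-- Formulas of PAML(□): Presburger atoms, ¬, ∧, □, ◇. -/
inductive PAML (n : ℕ) where
  | atom : PAtom n → PAML n
  | neg : PAML n → PAML n
  | and : PAML n → PAML n → PAML n
  | box : PAML n → PAML n
  | dia : PAML n → PAML n

/-- Kripke semantics of PAML(□) over the unlabelled transition graph (ℕⁿ, →). -/
def PAML.sat {n : ℕ} {T : Type} (N : PetriNet (Fin n) T) :
    (Fin n → ℕ) → PAML n → Prop
  | M, .atom a => PAtom.sat M a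
  | M, .neg φ => ¬ PAML.sat N M φ
  | M, .and φ ψ => PAML.sat N M φ ∧ PAML.sat N M ψ
  | M, .box φ => ∀ M', N.step M M' → PAML.sat N M' φ
  | M, .dia φ => ∃ M', N.step M M' ∧ PAML.sat N M' φ

/-- pre(X): the set of markings having a one-step successor in X. -/
def preSet {P T : Type} (N : PetriNet P T) (X : Set (P → ℕ)) : Set (P → ℕ) :=
  {M | ∃ M' ∈ X, N.step M M'}

/-! Every `IsSemilinearSet` is a `SemilinearSet`, so Mathlib's Ginsburg–Spanier theory (closure
under intersection, complement, images and preimages of additive maps) applies. Atoms are preimages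
of half-lines of `ℤ` and of points of `ZMod c` under additive maps. The firing relation of a transition
`t` is the linear set `(pre t, post t) + {(s, s) | s ∈ ℕⁿ}` of `ℕⁿ × ℕⁿ`, so `pre X` is the first
projection of `(→) ∩ (ℕⁿ × X)`; semilinearity of satisfaction sets follows by induction. -/

open Set Pointwise

section Semilinear

variable {M : Type*} [AddCommMonoid M] {s : Set M}

theorem IsLinearSet.linearSet (hs : IsLinearSet s) : LinearSet s := by
  classical
  obtain ⟨a, m, f, rfl⟩ := isLinearSet_iff_exists_fin_addMonoidHom.1 hs
  have hf : ∀ k : Fin m → ℕ, f k = ∑ i, k i • f (Pi.single i 1) := fun k => by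
    conv_lhs => rw [← Finset.univ_sum_single k]
    simp only [map_sum, ← map_nsmul, ← Pi.single_smul', smul_eq_mul, mul_one]
  refine ⟨a, m, fun i => f (Pi.single i 1), ?_⟩
  ext v
  simp only [mem_vadd_set, mem_range, exists_exists_eq_and, vadd_eq_add, mem_ofPred_eq]
  exact exists_congr fun k => by rw [hf, eq_comm]

theorem IsSemilinearSet.semilinearSet (hs : IsSemilinearSet s) : SemilinearSet s := by
  obtain ⟨S, hS, rfl⟩ := isSemilinearSet_iff.1 hs
  refine ⟨S.card, fun i => S.equivFin.symm i, fun i => (hS _ (S.equivFin.symm i).2).linearSet, ?_⟩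
  ext v
  simp only [mem_sUnion, Finset.mem_coe, mem_iUnion]
  constructor
  · rintro ⟨t, ht, hv⟩
    exact ⟨S.equivFin ⟨t, ht⟩, by simpa using hv⟩
  · rintro ⟨i, hv⟩
    exact ⟨_, (S.equivFin.symm i).2, hv⟩

end Semilinear

theorem Int.isSemilinearSet_Ici (k : ℤ) : IsSemilinearSet (Ici k) := by
  refine (show IsLinearSet (Ici k) from ⟨k, {1}, finite_singleton 1, ?_⟩).isSemilinearSet
  ext z
  simp only [mem_Ici, mem_vadd_set, SetLike.mem_coe, AddSubmonoid.mem_closure_singleton,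
    vadd_eq_add, exists_exists_eq_and, nsmul_eq_mul, mul_one]
  exact ⟨fun h => ⟨(z - k).toNat, by omega⟩, fun ⟨_, h⟩ => by omega⟩

theorem Int.isSemilinearSet_Iic (k : ℤ) : IsSemilinearSet (Iic k) := by
  refine (show IsLinearSet (Iic k) from ⟨k, {-1}, finite_singleton (-1), ?_⟩).isSemilinearSet
  ext z
  simp only [mem_Iic, mem_vadd_set, SetLike.mem_coe, AddSubmonoid.mem_closure_singleton,
    vadd_eq_add, exists_exists_eq_and, nsmul_eq_mul, mul_neg, mul_one]
  exact ⟨fun h => ⟨(k - z).toNat, by omega⟩, fun ⟨_, h⟩ => by omega⟩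

def intLinearForm {ι : Type*} [Fintype ι] (a : ι → ℤ) : (ι → ℕ) →+ ℤ where
  toFun M := ∑ i, a i * (M i : ℤ)
  map_zero' := by simp
  map_add' M M' := by simp [mul_add, Finset.sum_add_distrib]

theorem PAtom.isSemilinearSet_setOf_sat {n : ℕ} (φ : PAtom n) :
    IsSemilinearSet {M : Fin n → ℕ | PAtom.sat M φ} := by
  induction φ with
  | top => exact IsSemilinearSet.univ
  | le a k => exact (Int.isSemilinearSet_Iic k).preimage (intLinearForm a)
  | ge a k => exact (Int.isSemilinearSet_Ici k).preimage (intLinearForm a)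
  | mod a c k =>
    convert (IsSemilinearSet.singleton (k : ZMod c)).preimage
      ((Int.castAddHom (ZMod c)).comp (intLinearForm a)) using 1
    ext M
    simp [PAtom.sat, intLinearForm, ← ZMod.intCast_eq_intCast_iff]
  | and φ ψ hφ hψ => exact hφ.inter hψ
  | neg φ hφ => exact hφ.compl

namespace PetriNet

variable {P T : Type} (N : PetriNet P T)

theorem fires_iff {t : T} {M M' : P → ℕ} :
    N.fires t M M' ↔ ∃ s, M = (N.pre · t) + s ∧ M' = N.post t + s := by
  constructor
  · rintro ⟨hen, hM'⟩
    refine ⟨M - (N.pre · t), funext fun p => ?_, funext fun p => ?_⟩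
    all_goals have := hen p; simp only [hM' p, Pi.add_apply, Pi.sub_apply]; omega
  · rintro ⟨s, rfl, rfl⟩
    exact ⟨fun p => by simp, fun p => by simp only [Pi.add_apply]; omega⟩

theorem isLinearSet_fires [Finite P] (t : T) :
    IsLinearSet {p : (P → ℕ) × (P → ℕ) | N.fires t p.1 p.2} := by
  have : {p : (P → ℕ) × (P → ℕ) | N.fires t p.1 p.2}
      = ((N.pre · t), N.post t) +ᵥ (AddMonoidHom.prod (.id _) (.id _)) '' univ := by
    ext ⟨M, M'⟩
    simp [fires_iff, mem_vadd_set, eq_comm]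
  rw [this]
  exact (IsLinearSet.univ.image _).vadd _

theorem isSemilinearSet_step [Finite P] [Finite T] :
    IsSemilinearSet {p : (P → ℕ) × (P → ℕ) | N.step p.1 p.2} := by
  simp only [step, ofPred_exists]
  exact .iUnion fun t => (N.isLinearSet_fires t).isSemilinearSet

theorem preSet_eq_image (X : Set (P → ℕ)) :
    preSet N X = Prod.fst '' ({p | N.step p.1 p.2} ∩ Prod.snd ⁻¹' X) := by
  ext M
  simp [preSet, and_comm]

theorem isSemilinearSet_preSet [Finite P] [Finite T] {X : Set (P → ℕ)}
    (hX : IsSemilinearSet X) : IsSemilinearSet (preSet N X) := by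
  rw [preSet_eq_image]
  exact (N.isSemilinearSet_step.inter (hX.preimage (AddMonoidHom.snd _ _))).image
    (AddMonoidHom.fst _ _)

end PetriNet

namespace PAML

variable {n : ℕ} {T : Type} (N : PetriNet (Fin n) T)

theorem setOf_sat_neg (φ : PAML n) :
    {M | PAML.sat N M (.neg φ)} = {M | PAML.sat N M φ}ᶜ := rfl

theorem setOf_sat_and (φ ψ : PAML n) :
    {M | PAML.sat N M (.and φ ψ)} = {M | PAML.sat N M φ} ∩ {M | PAML.sat N M ψ} := rfl

theorem setOf_sat_dia (ψ : PAML n) :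
    {M | PAML.sat N M (.dia ψ)} = preSet N {M | PAML.sat N M ψ} := by
  ext M
  simp [PAML.sat, preSet, and_comm]

theorem setOf_sat_box (ψ : PAML n) :
    {M | PAML.sat N M (.box ψ)} = (preSet N {M | PAML.sat N M ψ}ᶜ)ᶜ := by
  ext M
  simp only [mem_ofPred_eq, PAML.sat, preSet, mem_compl_iff, not_exists, not_and]
  exact forall_congr' fun _ => by tauto

theorem isSemilinearSet_setOf_sat [Finite T] (φ : PAML n) :
    IsSemilinearSet {M | PAML.sat N M φ} := by
  induction φ with
  | atom a => exact a.isSemilinearSet_setOf_sat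
  | neg φ hφ => exact hφ.compl
  | and φ ψ hφ hψ => exact hφ.inter hψ
  | box ψ hψ =>
    rw [setOf_sat_box]
    exact (N.isSemilinearSet_preSet hψ.compl).compl
  | dia ψ hψ =>
    rw [setOf_sat_dia]
    exact N.isSemilinearSet_preSet hψ

end PAML

/-- For a Petri net with n places (finitely many transitions), Presburger atoms
define semilinear sets, the satisfaction sets of □ψ and ◇ψ are given by the
pre operator, and consequently the set of markings satisfying any formula of
PAML(□) in the unlabelled transition graph is semilinear. -/
theorem paml_satisfaction_semilinear (n : ℕ) {T : Type} [Fintype T]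
    (N : PetriNet (Fin n) T) :
    (∀ a : PAtom n, SemilinearSet {M : Fin n → ℕ | PAtom.sat M a}) ∧
    (∀ ψ : PAML n, {M : Fin n → ℕ | PAML.sat N M (.box ψ)} =
        Set.univ \ preSet N (Set.univ \ {M : Fin n → ℕ | PAML.sat N M ψ})) ∧
    (∀ ψ : PAML n, {M : Fin n → ℕ | PAML.sat N M (.dia ψ)} =
        preSet N {M : Fin n → ℕ | PAML.sat N M ψ}) ∧
    (∀ φ ψ : PAML n, {M : Fin n → ℕ | PAML.sat N M (.and φ ψ)} =
        {M : Fin n → ℕ | PAML.sat N M φ} ∩ {M : Fin n → ℕ | PAML.sat N M ψ}) ∧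
    (∀ φ : PAML n, {M : Fin n → ℕ | PAML.sat N M (.neg φ)} =
        Set.univ \ {M : Fin n → ℕ | PAML.sat N M φ}) ∧
    (∀ φ : PAML n, SemilinearSet {M : Fin n → ℕ | PAML.sat N M φ}) := by
  simp only [← compl_eq_univ_sdiff]
  exact ⟨fun a => a.isSemilinearSet_setOf_sat.semilinearSet, PAML.setOf_sat_box N,
    PAML.setOf_sat_dia N, PAML.setOf_sat_and N, PAML.setOf_sat_neg N,
    fun φ => (PAML.isSemilinearSet_setOf_sat N φ).semilinearSet⟩
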